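/- arXiv:1404.7721 — 4 statements merged into one kernel-verified Lean document; each statement's English description precedes it below -/
import Mathlib

section
/- Let f be an L^2-martingale with respect to an increasing filtration (F_n) on a probability space. Then the BMO^α norm sup_{n≥0} sup_{A∈F_n} P(A)^{-1/2-α} (∫_A |f - f_{n-1}|² dP)^{1/2} equals sup_τ P(τ<∞)^{-1/2-α} ‖(f - f_{τ-1}) 1_{τ<∞}‖_{L²}, where the latter supremum is taken over all stopping times τ. -/
open MeasureTheory ENNReal Set
open scoped Classical NNReal

noncomputable section

/-- Convention `f_{-1} = 0`: the value `f_{n-1}`. -/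
def predVal {Ω : Type*} (f : ℕ → Ω → ℝ) (n : ℕ) (ω : Ω) : ℝ :=
  if n = 0 then 0 else f (n - 1) ω

/-- Martingale difference `d_k f` (with `f_{-1} = 0`). -/
def mdiff {Ω : Type*} (f : ℕ → Ω → ℝ) (k : ℕ) (ω : Ω) : ℝ :=
  if k = 0 then f 0 ω else f k ω - f (k - 1) ω

/-- The `BMO^α` norm of the martingale `f` with final value `g`:
`sup_n sup_{A ∈ F_n} P(A)^{-1/2-α} (∫_A |g - f_{n-1}|² dP)^{1/2}`. -/
def bmoNorm {Ω : Type*} {m0 : MeasurableSpace Ω} (μ : Measure Ω)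
    (ℱ : Filtration ℕ m0) (α : ℝ) (f : ℕ → Ω → ℝ) (g : Ω → ℝ) : ℝ≥0∞ :=
  ⨆ (n : ℕ) (A : Set Ω) (_ : MeasurableSet[ℱ n] A),
    (∫⁻ ω in A, (‖g ω - predVal f n ω‖₊ : ℝ≥0∞) ^ 2 ∂μ) ^ (1/2 : ℝ)
      / μ A ^ (1/2 + α : ℝ)

/-- Stopping time with values in `ℕ ∪ {∞}`. -/
def IsStopTime {Ω : Type*} {m0 : MeasurableSpace Ω} (ℱ : Filtration ℕ m0)
    (τ : Ω → ℕ∞) : Prop :=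
  ∀ n : ℕ, MeasurableSet[ℱ n] {ω | τ ω ≤ (n : ℕ∞)}

/-- Mass of the tent over `τ` for the measure `w_k dP ⊗ dm`:
`∫_Ω Σ_{k ≥ τ} w_k 1_{τ < ∞} dP`. -/
def tentMass {Ω : Type*} [MeasurableSpace Ω] (μ : Measure Ω)
    (w : ℕ → Ω → ℝ≥0∞) (τ : Ω → ℕ∞) : ℝ≥0∞ :=
  ∫⁻ ω, ∑' k : ℕ, if τ ω ≤ (k : ℕ∞) ∧ τ ω < ⊤ then w k ω else 0 ∂μ

/-- The `α`-Carleson norm of the measure `w_k dP ⊗ dm`: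
`sup_τ μ(τ̂)/P(τ<∞)^{1+2α}`. -/
def carlesonNorm {Ω : Type*} {m0 : MeasurableSpace Ω} (μ : Measure Ω)
    (ℱ : Filtration ℕ m0) (α : ℝ) (w : ℕ → Ω → ℝ≥0∞) : ℝ≥0∞ :=
  ⨆ (τ : Ω → ℕ∞) (_ : IsStopTime ℱ τ),
    tentMass μ w τ / μ {ω | τ ω < ⊤} ^ (1 + 2*α : ℝ)

/-! A set `A ∈ F_n` is the event `{τ < ∞}` of the stopping time equal to `n` on `A` and to `∞`
off `A`, so every term of the `BMO^α` supremum is a stopping-time term. Conversely, `{τ < ∞}`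
splits into the `F_n`-measurable level sets `{τ = n}`; the `BMO^α` bound `B` on each level gives
`∫_{τ = n} |g - f_{n-1}|² ≤ B² P(τ = n)^{1+2α}`, and these add up to `B² P(τ < ∞)^{1+2α}` because
`x ↦ x^{1+2α}` is superadditive for the exponent `1 + 2α ≥ 1`. -/

namespace ENNReal

theorem sum_rpow_le_rpow_sum {ι : Type*} (s : Finset ι) (a : ι → ℝ≥0∞) {p : ℝ} (hp : 1 ≤ p) :
    ∑ i ∈ s, a i ^ p ≤ (∑ i ∈ s, a i) ^ p := by
  induction s using Finset.cons_induction with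
  | empty => simp [zero_rpow_of_pos (zero_lt_one.trans_le hp)]
  | cons i s hi ih =>
    rw [Finset.sum_cons, Finset.sum_cons]
    exact (add_le_add le_rfl ih).trans (add_rpow_le_rpow_add _ _ hp)

theorem tsum_rpow_le_rpow_tsum {ι : Type*} (a : ι → ℝ≥0∞) {p : ℝ} (hp : 1 ≤ p) :
    ∑' i, a i ^ p ≤ (∑' i, a i) ^ p := by
  rw [ENNReal.tsum_eq_iSup_sum]
  exact iSup_le fun s => (sum_rpow_le_rpow_sum s a hp).trans
    (rpow_le_rpow (ENNReal.sum_le_tsum s) (zero_le_one.trans hp))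

theorem rpow_half_div_rpow_le_iff {x y B : ℝ≥0∞} {s : ℝ} (hy₀ : y ≠ 0) (hy : y ≠ ∞) :
    x ^ (1 / 2 : ℝ) / y ^ s ≤ B ↔ x ≤ B ^ (2 : ℝ) * y ^ (2 * s) := by
  rw [ENNReal.div_le_iff (rpow_pos (pos_iff_ne_zero.2 hy₀) hy).ne' (rpow_ne_top_of_ne_zero hy₀ hy),
    one_div, rpow_inv_le_iff two_pos, mul_rpow_of_nonneg _ _ zero_le_two, ← rpow_mul, mul_comm s]

end ENNReal

section StopTime

variable {Ω : Type*} {m0 : MeasurableSpace Ω} {ℱ : Filtration ℕ m0}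

theorem IsStopTime.measurableSet_eq {τ : Ω → ℕ∞} (hτ : IsStopTime ℱ τ) (n : ℕ) :
    MeasurableSet[ℱ n] {ω | τ ω = n} := by
  cases n with
  | zero => simpa only [Nat.cast_zero, nonpos_iff_eq_zero] using hτ 0
  | succ k =>
    have hsplit : {ω | τ ω = ↑(k + 1)} = {ω | τ ω ≤ ↑(k + 1)} \ {ω | τ ω ≤ k} := by
      ext ω
      simp only [mem_ofPred_eq, mem_sdiff, not_le, Nat.cast_add, Nat.cast_one,
        ← ENat.add_one_le_iff (ENat.natCast_ne_top k), le_antisymm_iff]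
    rw [hsplit]
    exact (hτ (k + 1)).diff (ℱ.mono k.le_succ _ (hτ k))

theorem isStopTime_ite {A : Set Ω} {n : ℕ} (hA : MeasurableSet[ℱ n] A) :
    IsStopTime ℱ fun ω => if ω ∈ A then (n : ℕ∞) else ⊤ := by
  intro m
  by_cases hnm : n ≤ m
  · convert ℱ.mono hnm _ hA using 1
    ext ω
    by_cases hω : ω ∈ A <;> simp [hω, hnm]
  · convert @MeasurableSet.empty _ (ℱ m) using 1
    ext ω
    by_cases hω : ω ∈ A <;> simp [hω, hnm]

end StopTime

section Decomposition

variable {Ω : Type*} [MeasurableSpace Ω] (μ : Measure Ω) {τ : Ω → ℕ∞}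

theorem lintegral_setOf_lt_top_eq_tsum (hτ : ∀ n : ℕ, MeasurableSet {ω | τ ω = n})
    (F : ℕ → Ω → ℝ≥0∞) :
    ∫⁻ ω in {ω | τ ω < ⊤}, F (τ ω).toNat ω ∂μ = ∑' n : ℕ, ∫⁻ ω in {ω | τ ω = n}, F n ω ∂μ := by
  have hunion : {ω | τ ω < ⊤} = ⋃ n : ℕ, {ω | τ ω = n} := by
    ext ω
    simp [lt_top_iff_ne_top, ENat.ne_top_iff_exists, eq_comm]
  have hdisj : Pairwise (Function.onFun Disjoint fun n : ℕ => {ω | τ ω = n}) :=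
    fun m n hmn => Set.disjoint_left.2 fun ω hm hn => hmn (by simpa [show τ ω = m from hm] using hn)
  rw [hunion, lintegral_iUnion hτ hdisj]
  refine tsum_congr fun n => setLIntegral_congr_fun (hτ n) fun ω hω => ?_
  simp [show τ ω = n from hω]

theorem measure_setOf_lt_top_eq_tsum (hτ : ∀ n : ℕ, MeasurableSet {ω | τ ω = n}) :
    μ {ω | τ ω < ⊤} = ∑' n : ℕ, μ {ω | τ ω = n} := by
  simpa using lintegral_setOf_lt_top_eq_tsum μ hτ 1

end Decomposition

section BMO

variable {Ω : Type*} {m0 : MeasurableSpace Ω} {μ : Measure Ω} {ℱ : Filtration ℕ m0} {α : ℝ}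
  {f : ℕ → Ω → ℝ} {g : Ω → ℝ}

theorem setLIntegral_le_bmoNorm_rpow_mul {n : ℕ} {A : Set Ω} (hA : MeasurableSet[ℱ n] A)
    (hμA : μ A ≠ ⊤) :
    ∫⁻ ω in A, (‖g ω - predVal f n ω‖₊ : ℝ≥0∞) ^ 2 ∂μ
      ≤ bmoNorm μ ℱ α f g ^ (2 : ℝ) * μ A ^ (2 * (1 / 2 + α)) := by
  rcases eq_or_ne (μ A) 0 with hμA₀ | hμA₀
  · simp [Measure.restrict_eq_zero.2 hμA₀]
  · rw [← ENNReal.rpow_half_div_rpow_le_iff hμA₀ hμA]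
    exact le_iSup₂_of_le n A (le_iSup_of_le hA le_rfl)

theorem stoppedRatio_le_bmoNorm (hα : 0 ≤ α) {τ : Ω → ℕ∞} (hτ : IsStopTime ℱ τ) :
    (∫⁻ ω in {ω | τ ω < ⊤}, (‖g ω - predVal f (τ ω).toNat ω‖₊ : ℝ≥0∞) ^ 2 ∂μ) ^ (1 / 2 : ℝ)
      / μ {ω | τ ω < ⊤} ^ (1 / 2 + α : ℝ) ≤ bmoNorm μ ℱ α f g := by
  have hτ_meas : ∀ n : ℕ, MeasurableSet {ω | τ ω = n} := fun n => ℱ.le n _ (hτ.measurableSet_eq n)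
  rcases eq_or_ne (μ {ω | τ ω < ⊤}) 0 with h₀ | h₀
  · simp [Measure.restrict_eq_zero.2 h₀]
  rcases eq_or_ne (μ {ω | τ ω < ⊤}) ⊤ with h_top | h_top
  · rw [h_top, ENNReal.top_rpow_of_pos (by linarith), ENNReal.div_top]
    exact bot_le
  rw [ENNReal.rpow_half_div_rpow_le_iff h₀ h_top, lintegral_setOf_lt_top_eq_tsum μ hτ_meas
    fun n ω => (‖g ω - predVal f n ω‖₊ : ℝ≥0∞) ^ 2]
  rw [measure_setOf_lt_top_eq_tsum μ hτ_meas] at h_top ⊢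
  calc ∑' n : ℕ, ∫⁻ ω in {ω | τ ω = n}, (‖g ω - predVal f n ω‖₊ : ℝ≥0∞) ^ 2 ∂μ
      ≤ ∑' n : ℕ, bmoNorm μ ℱ α f g ^ (2 : ℝ) * μ {ω | τ ω = n} ^ (2 * (1 / 2 + α)) :=
        ENNReal.tsum_le_tsum fun n => setLIntegral_le_bmoNorm_rpow_mul (hτ.measurableSet_eq n)
          (ne_top_of_le_ne_top h_top (ENNReal.le_tsum n))
    _ = bmoNorm μ ℱ α f g ^ (2 : ℝ) * ∑' n : ℕ, μ {ω | τ ω = n} ^ (2 * (1 / 2 + α)) :=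
        ENNReal.tsum_mul_left
    _ ≤ _ := by gcongr; exact ENNReal.tsum_rpow_le_rpow_tsum _ (by linarith)

end BMO

theorem stmt0_general {Ω : Type*} {m0 : MeasurableSpace Ω} (μ : Measure Ω)
    (ℱ : Filtration ℕ m0)
    (α : ℝ) (hα0 : 0 ≤ α)
    (f : ℕ → Ω → ℝ) (g : Ω → ℝ) :
    bmoNorm μ ℱ α f g =
      ⨆ (τ : Ω → ℕ∞) (_ : IsStopTime ℱ τ),
        (∫⁻ ω in {ω | τ ω < ⊤},
            (‖g ω - predVal f (τ ω).toNat ω‖₊ : ℝ≥0∞) ^ 2 ∂μ) ^ (1/2 : ℝ)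
          / μ {ω | τ ω < ⊤} ^ (1/2 + α : ℝ) := by
  refine le_antisymm (iSup_le fun n => iSup₂_le fun A hA => ?_)
    (iSup₂_le fun τ hτ => stoppedRatio_le_bmoNorm hα0 hτ)
  set τ : Ω → ℕ∞ := fun ω => if ω ∈ A then n else ⊤
  have hτA : {ω | τ ω < ⊤} = A := by
    ext ω
    by_cases hω : ω ∈ A <;> simp [τ, hω]
  refine le_iSup₂_of_le τ (isStopTime_ite hA) (le_of_eq ?_)
  rw [hτA]
  congr 2
  exact setLIntegral_congr_fun (ℱ.le n A hA) fun ω hω => by simp [τ, hω]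

/-- the `BMO^α` norm equals the supremum over stopping times `τ` of
`P(τ<∞)^{-1/2-α} ‖(f - f_{τ-1}) 1_{τ<∞}‖_{L²}`. -/
theorem stmt0 {Ω : Type*} {m0 : MeasurableSpace Ω} (μ : Measure Ω)
    [IsProbabilityMeasure μ] (ℱ : Filtration ℕ m0)
    (α : ℝ) (hα0 : 0 ≤ α) (hα1 : α ≤ 1)
    (f : ℕ → Ω → ℝ) (g : Ω → ℝ) (hf : Martingale f ℱ μ) (hg : MemLp g 2 μ)
    (hfg : ∀ n, f n =ᵐ[μ] μ[g | ℱ n]) :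
    bmoNorm μ ℱ α f g =
      ⨆ (τ : Ω → ℕ∞) (_ : IsStopTime ℱ τ),
        (∫⁻ ω in {ω | τ ω < ⊤},
            (‖g ω - predVal f (τ ω).toNat ω‖₊ : ℝ≥0∞) ^ 2 ∂μ) ^ (1/2 : ℝ)
          / μ {ω | τ ω < ⊤} ^ (1/2 + α : ℝ) :=
  stmt0_general μ ℱ α hα0 f g
end
end

section
/- Let dμ = μ_k dP⊗dm be a bounded α-Carleson measure with 0 < α < 1, and 1 < p < ∞. Then for every adapted process f = (f_n)_{n≥0}, ∫_{Ω×ℕ} |f_k|^p μ_k dP⊗dm ≤ (p/(p-1)) ‖|μ|‖_α ‖Mf‖_{L^{1/(2α)}} ‖Mf‖^{p-1}_{L^{p-1}}, where Mf = sup_n |f_n| is the maximal function. -/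
/-!
Fix a level `λ > 0` and let `τ` be the first time `|f_n|` exceeds `λ`. Then `{τ < ∞} = {Mf > λ}`
and the level set `{(ω, k) : |f_k(ω)| > λ}` lies in the tent over `τ`, so the Carleson condition
bounds its `μ`-mass by `‖|μ|‖_α P(Mf > λ)^{1+2α}`, while Chebyshev's inequality in
`L^{1/(2α)}` gives `λ P(Mf > λ)^{2α} ≤ ‖Mf‖_{L^{1/(2α)}}`. Hence
`λ μ{|f| > λ} ≤ ‖|μ|‖_α ‖Mf‖_{L^{1/(2α)}} P(Mf > λ)`; multiplying by `p λ^{p-2}` and integrating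
over `λ > 0`, the layer cake formula turns the left side into `∫ |f_k|^p dμ` and the right side
into `p/(p-1) ‖|μ|‖_α ‖Mf‖_{L^{1/(2α)}} ∫ (Mf)^{p-1} dP`.
-/

open MeasureTheory ENNReal Set
open scoped Classical NNReal

noncomputable section

section Tent

variable {Ω : Type*} {m0 : MeasurableSpace Ω} (μ : Measure Ω) (w : ℕ → Ω → ℝ≥0∞)

lemma tentMass_le_carlesonNorm_mul [IsFiniteMeasure μ] (ℱ : Filtration ℕ m0) (α : ℝ)
    {τ : Ω → ℕ∞} (hτ : IsStopTime ℱ τ) :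
    tentMass μ w τ ≤ carlesonNorm μ ℱ α w * μ {ω | τ ω < ⊤} ^ (1 + 2 * α) := by
  rcases eq_or_ne (μ {ω | τ ω < ⊤}) 0 with h0 | h0
  · have hnull : tentMass μ w τ = 0 := by
      rw [tentMass, ← lintegral_zero]
      refine lintegral_congr_ae ?_
      filter_upwards [measure_eq_zero_iff_ae_notMem.mp h0] with ω hω
      simp_all
    simp [hnull]
  · have hD0 : μ {ω | τ ω < ⊤} ^ (1 + 2 * α) ≠ 0 :=
      (ENNReal.rpow_pos (pos_iff_ne_zero.2 h0) (measure_ne_top _ _)).ne'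
    have hDtop := ENNReal.rpow_ne_top_of_ne_zero (y := 1 + 2 * α) h0 (measure_ne_top μ _)
    calc tentMass μ w τ
        = tentMass μ w τ / μ {ω | τ ω < ⊤} ^ (1 + 2 * α) * μ {ω | τ ω < ⊤} ^ (1 + 2 * α) :=
          (ENNReal.div_mul_cancel hD0 hDtop).symm
      _ ≤ carlesonNorm μ ℱ α w * μ {ω | τ ω < ⊤} ^ (1 + 2 * α) := by
          gcongr
          exact le_iSup₂ (f := fun τ (_ : IsStopTime ℱ τ) =>
            tentMass μ w τ / μ {ω | τ ω < ⊤} ^ (1 + 2 * α)) τ hτ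

def weightedCount : Measure (Ω × ℕ) :=
  (μ.prod Measure.count).withDensity fun q => w q.2 q.1

variable {μ w}

lemma lintegral_weightedCount [SFinite μ] (hw : ∀ k, Measurable (w k))
    {g : Ω × ℕ → ℝ≥0∞} (hg : Measurable g) :
    ∫⁻ q, g q ∂weightedCount μ w = ∫⁻ ω, ∑' k, g (ω, k) * w k ω ∂μ := by
  have hwq : Measurable fun q : Ω × ℕ => w q.2 q.1 := measurable_from_prod_countable_left hw
  rw [weightedCount, lintegral_withDensity_eq_lintegral_mul _ hwq hg,
    lintegral_prod _ (hwq.mul hg).aemeasurable]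
  simp only [lintegral_count, Pi.mul_apply, mul_comm]

lemma weightedCount_le_tentMass [SFinite μ] (hw : ∀ k, Measurable (w k))
    {s : Set (Ω × ℕ)} (hs : MeasurableSet s) {τ : Ω → ℕ∞}
    (hsub : ∀ ω k, (ω, k) ∈ s → τ ω ≤ k ∧ τ ω < ⊤) :
    weightedCount μ w s ≤ tentMass μ w τ := by
  rw [← lintegral_indicator_one hs, lintegral_weightedCount hw (measurable_one.indicator hs)]
  refine lintegral_mono fun ω => ENNReal.tsum_le_tsum fun k => ?_
  by_cases h : (ω, k) ∈ s
  · simp [h, hsub ω k h]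
  · simp [h]

end Tent

section LayerCake

variable {α : Type*} [MeasurableSpace α] {μ : Measure α} {M : α → ℝ≥0∞}

lemma lintegral_rpow_eq_lintegral_meas_lt_mul_of_ae_ne_top (hM : AEMeasurable M μ)
    (hM_top : ∀ᵐ x ∂μ, M x ≠ ⊤) {q : ℝ} (hq : 0 < q) :
    ∫⁻ x, M x ^ q ∂μ = ENNReal.ofReal q *
      ∫⁻ t in Ioi 0, μ {x | ENNReal.ofReal t < M x} * ENNReal.ofReal (t ^ (q - 1)) := by
  convert lintegral_rpow_eq_lintegral_meas_lt_mul μ (f := fun x => (M x).toReal)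
    (ae_of_all _ fun _ => toReal_nonneg) hM.ennreal_toReal hq using 1
  · refine lintegral_congr_ae ?_
    filter_upwards [hM_top] with x hx
    rw [← ENNReal.ofReal_rpow_of_nonneg toReal_nonneg hq.le, ofReal_toReal hx]
  · congr 1
    refine setLIntegral_congr_fun measurableSet_Ioi fun t ht => ?_
    congr 1
    refine measure_congr (Filter.eventuallyEq_set.2 ?_)
    filter_upwards [hM_top] with x hx
    exact ENNReal.ofReal_lt_iff_lt_toReal (le_of_lt ht) hx

lemma ofReal_mul_lintegral_meas_lt_mul_le (hM : AEMeasurable M μ) {q : ℝ} (hq : 0 < q) :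
    ENNReal.ofReal q *
      ∫⁻ t in Ioi 0, μ {x | ENNReal.ofReal t < M x} * ENNReal.ofReal (t ^ (q - 1))
      ≤ ∫⁻ x, M x ^ q ∂μ := by
  by_cases hfin : ∫⁻ x, M x ^ q ∂μ = ⊤
  · simp [hfin]
  refine (lintegral_rpow_eq_lintegral_meas_lt_mul_of_ae_ne_top hM ?_ hq).ge
  filter_upwards [ae_lt_top' (hM.pow_const q) hfin] with x hx hxtop
  simp [hxtop, ENNReal.top_rpow_of_pos hq] at hx

lemma mul_meas_lt_rpow_le_lintegral_rpow_inv (hM : AEMeasurable M μ) {s : ℝ} (hs : 0 < s)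
    (c : ℝ≥0∞) :
    c * μ {x | c < M x} ^ s ≤ (∫⁻ x, M x ^ s⁻¹ ∂μ) ^ s := by
  have hmarkov : c ^ s⁻¹ * μ {x | c < M x} ≤ ∫⁻ x, M x ^ s⁻¹ ∂μ :=
    calc c ^ s⁻¹ * μ {x | c < M x}
        ≤ c ^ s⁻¹ * μ {x | c ^ s⁻¹ ≤ M x ^ s⁻¹} := by
          gcongr _ * μ ?_
          exact fun x (hx : c < M x) => ENNReal.rpow_le_rpow hx.le (inv_nonneg.2 hs.le)
      _ ≤ ∫⁻ x, M x ^ s⁻¹ ∂μ := mul_meas_ge_le_lintegral₀ (hM.pow_const _) _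
  calc c * μ {x | c < M x} ^ s = (c ^ s⁻¹ * μ {x | c < M x}) ^ s := by
        rw [ENNReal.mul_rpow_of_nonneg _ _ hs.le, ENNReal.rpow_inv_rpow hs.ne']
    _ ≤ (∫⁻ x, M x ^ s⁻¹ ∂μ) ^ s := ENNReal.rpow_le_rpow hmarkov hs.le

lemma lintegral_rpow_le_of_mul_meas_lt_le {β : Type*} [MeasurableSpace β] {ν : Measure β}
    {G : β → ℝ≥0∞} (hG : AEMeasurable G ν) (hG_top : ∀ᵐ y ∂ν, G y ≠ ⊤)
    (hM : AEMeasurable M μ) {K : ℝ≥0∞} (hK : ∀ c, c * ν {y | c < G y} ≤ K * μ {x | c < M x})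
    {p : ℝ} (hp : 1 < p) :
    ∫⁻ y, G y ^ p ∂ν ≤ ENNReal.ofReal (p / (p - 1)) * K * ∫⁻ x, M x ^ (p - 1) ∂μ := by
  set tail : ℝ → ℝ≥0∞ := fun t =>
    μ {x | ENNReal.ofReal t < M x} * ENNReal.ofReal (t ^ (p - 1 - 1))
  have htail : Measurable tail := by
    have hanti : Antitone fun t : ℝ => μ {x | ENNReal.ofReal t < M x} :=
      fun s t hst => measure_mono fun x (hx : _ < _) => (ofReal_le_ofReal hst).trans_lt hx
    exact hanti.measurable.mul (measurable_id.pow_const _).ennreal_ofReal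
  have hlevel : ∀ t ∈ Ioi (0 : ℝ),
      ν {y | ENNReal.ofReal t < G y} * ENNReal.ofReal (t ^ (p - 1)) ≤ K * tail t := by
    intro t (ht : 0 < t)
    have hpow : t ^ (p - 1) = t * t ^ (p - 1 - 1) := by
      rw [mul_comm, ← Real.rpow_add_one ht.ne', sub_add_cancel]
    calc ν {y | ENNReal.ofReal t < G y} * ENNReal.ofReal (t ^ (p - 1))
        = ENNReal.ofReal t * ν {y | ENNReal.ofReal t < G y} * ENNReal.ofReal (t ^ (p - 1 - 1)) := by
          rw [hpow, ofReal_mul ht.le]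
          ring
      _ ≤ K * tail t := by
          rw [← mul_assoc]
          gcongr ?_ * _
          exact hK _
  have hp1 : ENNReal.ofReal (p - 1) ≠ 0 := by simpa using hp
  calc ∫⁻ y, G y ^ p ∂ν
      = ENNReal.ofReal p * ∫⁻ t in Ioi 0,
          ν {y | ENNReal.ofReal t < G y} * ENNReal.ofReal (t ^ (p - 1)) :=
        lintegral_rpow_eq_lintegral_meas_lt_mul_of_ae_ne_top hG hG_top (by linarith)
    _ ≤ ENNReal.ofReal p * ∫⁻ t in Ioi 0, K * tail t := by
        gcongr ENNReal.ofReal p * ?_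
        exact setLIntegral_mono' measurableSet_Ioi hlevel
    _ = ENNReal.ofReal p * K * ∫⁻ t in Ioi 0, tail t := by
        rw [lintegral_const_mul _ htail, mul_assoc]
    _ ≤ ENNReal.ofReal p * K * ((ENNReal.ofReal (p - 1))⁻¹ * ∫⁻ x, M x ^ (p - 1) ∂μ) := by
        gcongr _ * ?_
        rw [← ENNReal.div_eq_inv_mul]
        refine (ENNReal.le_div_iff_mul_le (.inl hp1) (.inl ofReal_ne_top)).2 ?_
        rw [mul_comm]
        exact ofReal_mul_lintegral_meas_lt_mul_le hM (by linarith)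
    _ = ENNReal.ofReal (p / (p - 1)) * K * ∫⁻ x, M x ^ (p - 1) ∂μ := by
        rw [ofReal_div_of_pos (by linarith), div_eq_mul_inv]
        ring

end LayerCake

def maximalFunction {Ω : Type*} (f : ℕ → Ω → ℝ) (ω : Ω) : ℝ≥0∞ :=
  ⨆ n, (‖f n ω‖₊ : ℝ≥0∞)

lemma measurable_maximalFunction {Ω : Type*} [MeasurableSpace Ω] {f : ℕ → Ω → ℝ}
    (hf : ∀ n, Measurable (f n)) : Measurable (maximalFunction f) :=
  Measurable.iSup fun n => (hf n).nnnorm.coe_nnreal_ennreal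

section Level

variable {Ω : Type*} {m0 : MeasurableSpace Ω} (μ : Measure Ω) [IsFiniteMeasure μ]
  {ℱ : Filtration ℕ m0} {f : ℕ → Ω → ℝ} {w : ℕ → Ω → ℝ≥0∞}

lemma mul_weightedCount_lt_nnnorm_le (α : ℝ) (hα : 0 < α) (hw : ∀ k, Measurable (w k))
    (hf : Adapted ℱ f) (c : ℝ≥0∞) :
    c * weightedCount μ w {q | c < ‖f q.2 q.1‖₊}
      ≤ carlesonNorm μ ℱ α w * (∫⁻ ω, maximalFunction f ω ^ (1 / (2 * α)) ∂μ) ^ (2 * α)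
        * μ {ω | c < maximalFunction f ω} := by
  have hfm : ∀ n, Measurable (f n) := fun n => (hf n).mono (ℱ.le n) le_rfl
  have hlevel : MeasurableSet {x : ℝ | c < ‖x‖₊} :=
    measurableSet_lt measurable_const measurable_nnnorm.coe_nnreal_ennreal
  set τ : Ω → ℕ∞ := hittingAfter f {x : ℝ | c < ‖x‖₊} 0
  have hτ : IsStopTime ℱ τ := hf.isStoppingTime_hittingAfter hlevel
  have hτ_lt_top : {ω | τ ω < ⊤} = {ω | c < maximalFunction f ω} := by
    ext ω
    change hittingAfter f _ 0 ω < (⊤ : WithTop ℕ) ↔ _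
    rw [lt_top_iff_ne_top, ne_eq, hittingAfter_eq_top_iff]
    simp [maximalFunction, lt_iSup_iff]
  have hsub : ∀ ω k, (ω, k) ∈ {q : Ω × ℕ | c < ‖f q.2 q.1‖₊} → τ ω ≤ k ∧ τ ω < ⊤ :=
    fun ω k h => ⟨hittingAfter_le_of_mem (Nat.zero_le k) h,
      (hittingAfter_le_of_mem (Nat.zero_le k) h).trans_lt (WithTop.coe_lt_top k)⟩
  have hs : MeasurableSet {q : Ω × ℕ | c < ‖f q.2 q.1‖₊} :=
    measurableSet_lt measurable_const
      (measurable_from_prod_countable_left fun k => (hfm k).nnnorm.coe_nnreal_ennreal)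
  set S := {ω | c < maximalFunction f ω}
  calc c * weightedCount μ w {q | c < ‖f q.2 q.1‖₊}
      ≤ c * (carlesonNorm μ ℱ α w * μ S ^ (1 + 2 * α)) := by
        gcongr
        rw [← hτ_lt_top]
        exact (weightedCount_le_tentMass hw hs hsub).trans
          (tentMass_le_carlesonNorm_mul μ w ℱ α hτ)
    _ = carlesonNorm μ ℱ α w * (c * μ S ^ (2 * α)) * μ S := by
        rw [add_comm, ENNReal.rpow_add_of_nonneg _ _ (by positivity) zero_le_one,
          ENNReal.rpow_one]
        ring
    _ ≤ carlesonNorm μ ℱ α w * (∫⁻ ω, maximalFunction f ω ^ (1 / (2 * α)) ∂μ) ^ (2 * α)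
        * μ S := by
        rw [one_div]
        gcongr
        exact mul_meas_lt_rpow_le_lintegral_rpow_inv
          (measurable_maximalFunction hfm).aemeasurable (by positivity) c

end Level

theorem stmt5_general {Ω : Type*} {m0 : MeasurableSpace Ω} (μ : Measure Ω)
    [IsProbabilityMeasure μ] (ℱ : Filtration ℕ m0)
    (α : ℝ) (hα0 : 0 < α)
    (w : ℕ → Ω → ℝ≥0∞) (hw : ∀ k, Measurable (w k))
    (p : ℝ) (hp : 1 < p)
    (f : ℕ → Ω → ℝ) (hf : Adapted ℱ f) :
    (∫⁻ ω, ∑' k : ℕ, (‖f k ω‖₊ : ℝ≥0∞) ^ p * w k ω ∂μ)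
      ≤ ENNReal.ofReal (p / (p - 1)) * carlesonNorm μ ℱ α w
        * (∫⁻ ω, (⨆ n, (‖f n ω‖₊ : ℝ≥0∞)) ^ (1/(2*α)) ∂μ) ^ (2*α)
        * (∫⁻ ω, (⨆ n, (‖f n ω‖₊ : ℝ≥0∞)) ^ (p - 1) ∂μ) := by
  have hfm : ∀ n, Measurable (f n) := fun n => (hf n).mono (ℱ.le n) le_rfl
  have hF : Measurable fun q : Ω × ℕ => (‖f q.2 q.1‖₊ : ℝ≥0∞) :=
    measurable_from_prod_countable_left fun k => (hfm k).nnnorm.coe_nnreal_ennreal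
  calc (∫⁻ ω, ∑' k : ℕ, (‖f k ω‖₊ : ℝ≥0∞) ^ p * w k ω ∂μ)
      = ∫⁻ q, (‖f q.2 q.1‖₊ : ℝ≥0∞) ^ p ∂weightedCount μ w :=
        (lintegral_weightedCount hw (hF.pow_const p)).symm
    _ ≤ ENNReal.ofReal (p / (p - 1))
          * (carlesonNorm μ ℱ α w * (∫⁻ ω, maximalFunction f ω ^ (1 / (2 * α)) ∂μ) ^ (2 * α))
          * ∫⁻ ω, maximalFunction f ω ^ (p - 1) ∂μ :=
        lintegral_rpow_le_of_mul_meas_lt_le hF.aemeasurable (ae_of_all _ fun _ => coe_ne_top)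
          (measurable_maximalFunction hfm).aemeasurable
          (mul_weightedCount_lt_nnnorm_le μ α hα0 hw hf) hp
    _ = _ := by simp only [maximalFunction, mul_assoc]

/-- Carleson embedding inequality. For a bounded `α`-Carleson measure
`μ_k dP ⊗ dm` (`0 < α < 1`), `1 < p < ∞`, and any adapted process `f`,
`∫ |f_k|^p μ_k dP⊗dm ≤ (p/(p-1)) ‖|μ|‖_α ‖Mf‖_{L^{1/(2α)}} ‖Mf‖^{p-1}_{L^{p-1}}`. -/
theorem stmt5 {Ω : Type*} {m0 : MeasurableSpace Ω} (μ : Measure Ω)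
    [IsProbabilityMeasure μ] (ℱ : Filtration ℕ m0)
    (α : ℝ) (hα0 : 0 < α) (hα1 : α < 1)
    (w : ℕ → Ω → ℝ≥0∞) (hw : ∀ k, Measurable (w k))
    (hbdd : carlesonNorm μ ℱ α w < ⊤)
    (p : ℝ) (hp : 1 < p)
    (f : ℕ → Ω → ℝ) (hf : Adapted ℱ f) :
    (∫⁻ ω, ∑' k : ℕ, (‖f k ω‖₊ : ℝ≥0∞) ^ p * w k ω ∂μ)
      ≤ ENNReal.ofReal (p / (p - 1)) * carlesonNorm μ ℱ α w
        * (∫⁻ ω, (⨆ n, (‖f n ω‖₊ : ℝ≥0∞)) ^ (1/(2*α)) ∂μ) ^ (2*α)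
        * (∫⁻ ω, (⨆ n, (‖f n ω‖₊ : ℝ≥0∞)) ^ (p - 1) ∂μ) :=
  stmt5_general μ ℱ α hα0 w hw p hp f hf
end
end

section
/- The square function S(f) = (Σ_{k=0}^∞ |d_k f|²)^{1/2} is bounded on BMO^α: there is a constant C such that ‖S(f)‖_{BMO^α} ≤ C ‖f‖_{BMO^α} for all f ∈ BMO^α, where S_n(f) = (Σ_{k=0}^n |d_k f|²)^{1/2} plays the role of the n-th term of the adapted process S(f). -/
open MeasureTheory ENNReal Set
open scoped Classical NNReal

noncomputable section

/-- The square function `S(f) = (Σ_{k=0}^∞ |d_k f|²)^{1/2}`. -/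
def sqFn {Ω : Type*} (f : ℕ → Ω → ℝ) (ω : Ω) : ℝ :=
  Real.sqrt (∑' k : ℕ, (mdiff f k ω) ^ 2)

/-- The truncated square function `S_n(f) = (Σ_{k=0}^n |d_k f|²)^{1/2}`. -/
def sqFnN {Ω : Type*} (f : ℕ → Ω → ℝ) (n : ℕ) (ω : Ω) : ℝ :=
  Real.sqrt (∑ k ∈ Finset.range (n + 1), (mdiff f k ω) ^ 2)

/-! We take `C = 1`. On `A ∈ ℱ n`, the reverse triangle inequality in `ℓ²` gives
`|S(f) - S_{n-1}(f)|² ≤ ∑_{k ≥ n} |d_k f|²`, and since martingale differences are orthogonal,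
`∫_A ∑_{k ≥ n} |d_k f|² ≤ ∫_A |g - f_{n-1}|²`. -/

lemma predVal_add_mdiff {Ω : Type*} (f : ℕ → Ω → ℝ) (n : ℕ) (ω : Ω) :
    predVal f n ω + mdiff f n ω = f n ω := by
  cases n <;> simp [predVal, mdiff]

lemma predVal_zero {Ω : Type*} (f : ℕ → Ω → ℝ) : predVal f 0 = 0 := by
  ext ω
  simp [predVal]

lemma predVal_succ {Ω : Type*} (f : ℕ → Ω → ℝ) (n : ℕ) : predVal f (n + 1) = f n := by
  ext ω
  simp [predVal]

lemma enorm_sq_eq_ofReal_sq (x : ℝ) : ‖x‖ₑ ^ 2 = ENNReal.ofReal (x ^ 2) := by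
  rw [Real.enorm_eq_ofReal_abs, ← ENNReal.ofReal_pow (abs_nonneg x), sq_abs]

lemma sq_sqrt_sub_sqrt_le {a b : ℝ} (ha : 0 ≤ a) (hab : a ≤ b) :
    (√b - √a) ^ 2 ≤ b - a := by
  have hsa : √a ≤ √b := Real.sqrt_le_sqrt hab
  nlinarith [Real.sq_sqrt ha, Real.sq_sqrt (ha.trans hab), Real.sqrt_nonneg a]

/-- No summability is needed: without it the real `tsum` is junk (`0`) but the right side is `∞`. -/
lemma enorm_sqrt_tsum_sub_sqrt_sum_sq_le (a : ℕ → ℝ) (n : ℕ) :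
    ‖√(∑' k, a k ^ 2) - √(∑ k ∈ Finset.range n, a k ^ 2)‖ₑ ^ 2
      ≤ ∑' k, ‖a (k + n)‖ₑ ^ 2 := by
  simp_rw [enorm_sq_eq_ofReal_sq]
  by_cases hs : Summable fun k => a k ^ 2
  · have hsplit := hs.sum_add_tsum_nat_add n
    have hhead : 0 ≤ ∑ k ∈ Finset.range n, a k ^ 2 := by positivity
    have htail : 0 ≤ ∑' k, a (k + n) ^ 2 := tsum_nonneg fun k => sq_nonneg _
    rw [← ENNReal.ofReal_tsum_of_nonneg (fun k => sq_nonneg _)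
      ((summable_nat_add_iff n).mpr hs)]
    exact ENNReal.ofReal_le_ofReal
      ((sq_sqrt_sub_sqrt_le hhead (by linarith)).trans (by linarith))
  · suffices h : ∑' k, ENNReal.ofReal (a (k + n) ^ 2) = ⊤ by rw [h]; exact le_top
    by_contra htop
    refine hs ((summable_nat_add_iff n).mp ((ENNReal.summable_toReal htop).congr fun k => ?_))
    exact ENNReal.toReal_ofReal (sq_nonneg _)

lemma predVal_sqFnN {Ω : Type*} (f : ℕ → Ω → ℝ) (n : ℕ) (ω : Ω) :
    predVal (sqFnN f) n ω = √(∑ k ∈ Finset.range n, mdiff f k ω ^ 2) := by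
  cases n <;> simp [predVal, sqFnN]

lemma enorm_sqFn_sub_predVal_sqFnN_sq_le {Ω : Type*} (f : ℕ → Ω → ℝ) (n : ℕ) (ω : Ω) :
    ‖sqFn f ω - predVal (sqFnN f) n ω‖ₑ ^ 2 ≤ ∑' k, ‖mdiff f (k + n) ω‖ₑ ^ 2 := by
  rw [predVal_sqFnN]
  exact enorm_sqrt_tsum_sub_sqrt_sum_sq_le (fun k => mdiff f k ω) n

section Orthogonality

variable {Ω : Type*} {m m0 : MeasurableSpace Ω} {μ : Measure Ω}

lemma ofReal_setIntegral_sq {h : Ω → ℝ} (hh : MemLp h 2 μ) (A : Set Ω) :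
    ENNReal.ofReal (∫ ω in A, h ω ^ 2 ∂μ) = ∫⁻ ω in A, ‖h ω‖ₑ ^ 2 ∂μ := by
  simp_rw [enorm_sq_eq_ofReal_sq]
  exact ofReal_integral_eq_lintegral_ofReal hh.integrable_sq.restrict
    (Filter.Eventually.of_forall fun ω => sq_nonneg _)

lemma integral_mul_sub_condExp_eq_zero [IsFiniteMeasure μ] (hm : m ≤ m0) {h x : Ω → ℝ}
    (hh : MemLp h 2 μ) (hhm : AEStronglyMeasurable[m] h μ) (hx : MemLp x 2 μ) :
    ∫ ω, h ω * (x ω - μ[x | m] ω) ∂μ = 0 := by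
  have hhx : Integrable (fun ω => h ω * x ω) μ := hh.integrable_mul hx
  have hhc : Integrable (fun ω => h ω * μ[x | m] ω) μ :=
    hh.integrable_mul (hx.condExp one_le_two)
  have hpull : ∫ ω, h ω * x ω ∂μ = ∫ ω, h ω * μ[x | m] ω ∂μ := calc
    ∫ ω, h ω * x ω ∂μ = ∫ ω, μ[h * x | m] ω ∂μ := (integral_condExp hm).symm
    _ = ∫ ω, h ω * μ[x | m] ω ∂μ := integral_congr_ae
      (condExp_mul_of_aestronglyMeasurable_left hhm hhx (hx.integrable one_le_two))
  simp_rw [mul_sub]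
  rw [integral_sub hhx hhc, hpull, sub_self]

end Orthogonality

section SquareIntegrableMartingale

variable {Ω : Type*} {m0 : MeasurableSpace Ω} {μ : Measure Ω}
  {ℱ : Filtration ℕ m0} {f : ℕ → Ω → ℝ} {g : Ω → ℝ}

lemma memLp_of_ae_eq_condExp (hg : MemLp g 2 μ) (hfg : ∀ n, f n =ᵐ[μ] μ[g | ℱ n]) (n : ℕ) :
    MemLp (f n) 2 μ :=
  (hg.condExp one_le_two).ae_eq (hfg n).symm

lemma memLp_mdiff (hg : MemLp g 2 μ) (hfg : ∀ n, f n =ᵐ[μ] μ[g | ℱ n]) (n : ℕ) :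
    MemLp (mdiff f n) 2 μ := by
  cases n with
  | zero => exact memLp_of_ae_eq_condExp hg hfg 0
  | succ k =>
    exact (memLp_of_ae_eq_condExp hg hfg (k + 1)).sub (memLp_of_ae_eq_condExp hg hfg k)

lemma memLp_predVal (hg : MemLp g 2 μ) (hfg : ∀ n, f n =ᵐ[μ] μ[g | ℱ n]) (n : ℕ) :
    MemLp (predVal f n) 2 μ := by
  cases n with
  | zero => rw [predVal_zero]; exact MemLp.zero
  | succ k => rw [predVal_succ]; exact memLp_of_ae_eq_condExp hg hfg k

lemma stronglyMeasurable_mdiff (hf : StronglyAdapted ℱ f) (n : ℕ) :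
    StronglyMeasurable[ℱ n] (mdiff f n) := by
  cases n with
  | zero => exact hf 0
  | succ k => exact (hf (k + 1)).sub ((hf k).mono (ℱ.mono k.le_succ))

/-- Pythagoras: `1_A d_j f` is `ℱ j`-measurable, hence orthogonal to `g - f_j = g - 𝔼[g | ℱ j]`. -/
lemma setIntegral_sq_sub_predVal [IsFiniteMeasure μ] (hf : StronglyAdapted ℱ f)
    (hg : MemLp g 2 μ) (hfg : ∀ n, f n =ᵐ[μ] μ[g | ℱ n])
    {j : ℕ} {A : Set Ω} (hA : MeasurableSet[ℱ j] A) :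
    ∫ ω in A, (g ω - predVal f j ω) ^ 2 ∂μ
      = ∫ ω in A, (g ω - f j ω) ^ 2 ∂μ + ∫ ω in A, mdiff f j ω ^ 2 ∂μ := by
  have hd := memLp_mdiff hg hfg j
  have hr : MemLp (fun ω => g ω - f j ω) 2 μ := hg.sub (memLp_of_ae_eq_condExp hg hfg j)
  have hcross : ∫ ω in A, mdiff f j ω * (g ω - f j ω) ∂μ = 0 := by
    rw [← integral_indicator (ℱ.le j A hA), ← integral_mul_sub_condExp_eq_zero (ℱ.le j)
      (hd.indicator (ℱ.le j A hA))
      ((stronglyMeasurable_mdiff hf j).indicator hA).aestronglyMeasurable hg]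
    refine integral_congr_ae ?_
    filter_upwards [hfg j] with ω hω
    by_cases hωA : ω ∈ A <;> simp [hωA, hω]
  have hdr : Integrable (fun ω => 2 * (mdiff f j ω * (g ω - f j ω))) (μ.restrict A) :=
    (hd.integrable_mul hr).restrict.const_mul 2
  calc ∫ ω in A, (g ω - predVal f j ω) ^ 2 ∂μ
      = ∫ ω in A, ((g ω - f j ω) ^ 2 + mdiff f j ω ^ 2
          + 2 * (mdiff f j ω * (g ω - f j ω))) ∂μ := by
        congr 1 with ω
        rw [← predVal_add_mdiff f j ω]
        ring
    _ = ∫ ω in A, (g ω - f j ω) ^ 2 ∂μ + ∫ ω in A, mdiff f j ω ^ 2 ∂μ := by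
        rw [integral_add (f := fun ω => (g ω - f j ω) ^ 2 + mdiff f j ω ^ 2)
            (hr.integrable_sq.restrict.add hd.integrable_sq.restrict) hdr,
          integral_add hr.integrable_sq.restrict hd.integrable_sq.restrict,
          integral_const_mul, hcross, mul_zero, add_zero]

lemma setIntegral_sq_sub_predVal_eq_sum_add [IsFiniteMeasure μ] (hf : StronglyAdapted ℱ f)
    (hg : MemLp g 2 μ) (hfg : ∀ n, f n =ᵐ[μ] μ[g | ℱ n])
    {n : ℕ} {A : Set Ω} (hA : MeasurableSet[ℱ n] A) (M : ℕ) :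
    ∫ ω in A, (g ω - predVal f n ω) ^ 2 ∂μ
      = ∑ k ∈ Finset.range M, ∫ ω in A, mdiff f (k + n) ω ^ 2 ∂μ
        + ∫ ω in A, (g ω - predVal f (M + n) ω) ^ 2 ∂μ := by
  induction M with
  | zero => simp
  | succ M ih =>
    rw [ih, setIntegral_sq_sub_predVal hf hg hfg (ℱ.mono (Nat.le_add_left n M) A hA),
      Finset.sum_range_succ, Nat.add_right_comm, predVal_succ]
    ring

lemma sum_setIntegral_sq_mdiff_le [IsFiniteMeasure μ] (hf : StronglyAdapted ℱ f)
    (hg : MemLp g 2 μ) (hfg : ∀ n, f n =ᵐ[μ] μ[g | ℱ n])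
    {n : ℕ} {A : Set Ω} (hA : MeasurableSet[ℱ n] A) (M : ℕ) :
    ∑ k ∈ Finset.range M, ∫ ω in A, mdiff f (k + n) ω ^ 2 ∂μ
      ≤ ∫ ω in A, (g ω - predVal f n ω) ^ 2 ∂μ := by
  rw [setIntegral_sq_sub_predVal_eq_sum_add hf hg hfg hA M]
  exact le_add_of_nonneg_right (integral_nonneg fun ω => sq_nonneg _)

lemma tsum_lintegral_enorm_mdiff_sq_le [IsFiniteMeasure μ] (hf : StronglyAdapted ℱ f)
    (hg : MemLp g 2 μ) (hfg : ∀ n, f n =ᵐ[μ] μ[g | ℱ n])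
    {n : ℕ} {A : Set Ω} (hA : MeasurableSet[ℱ n] A) :
    ∑' k, ∫⁻ ω in A, ‖mdiff f (k + n) ω‖ₑ ^ 2 ∂μ
      ≤ ∫⁻ ω in A, ‖g ω - predVal f n ω‖ₑ ^ 2 ∂μ := by
  refine ENNReal.tsum_le_of_sum_range_le fun M => ?_
  rw [← ofReal_setIntegral_sq (h := fun ω => g ω - predVal f n ω)
    (hg.sub (memLp_predVal hg hfg n))]
  simp_rw [← ofReal_setIntegral_sq (memLp_mdiff hg hfg _)]
  rw [← ENNReal.ofReal_sum_of_nonneg fun k _ => integral_nonneg fun ω => sq_nonneg _]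
  exact ENNReal.ofReal_le_ofReal (sum_setIntegral_sq_mdiff_le hf hg hfg hA M)

lemma setLIntegral_enorm_sqFn_sub_le [IsFiniteMeasure μ] (hf : StronglyAdapted ℱ f)
    (hg : MemLp g 2 μ) (hfg : ∀ n, f n =ᵐ[μ] μ[g | ℱ n])
    {n : ℕ} {A : Set Ω} (hA : MeasurableSet[ℱ n] A) :
    ∫⁻ ω in A, ‖sqFn f ω - predVal (sqFnN f) n ω‖ₑ ^ 2 ∂μ
      ≤ ∫⁻ ω in A, ‖g ω - predVal f n ω‖ₑ ^ 2 ∂μ := calc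
  _ ≤ ∫⁻ ω in A, ∑' k, ‖mdiff f (k + n) ω‖ₑ ^ 2 ∂μ :=
      lintegral_mono fun ω => enorm_sqFn_sub_predVal_sqFnN_sq_le f n ω
  _ = ∑' k, ∫⁻ ω in A, ‖mdiff f (k + n) ω‖ₑ ^ 2 ∂μ :=
      lintegral_tsum fun k =>
        ((memLp_mdiff hg hfg (k + n)).aestronglyMeasurable.enorm.pow_const 2).restrict
  _ ≤ _ := tsum_lintegral_enorm_mdiff_sq_le hf hg hfg hA

end SquareIntegrableMartingale

lemma bmoNorm_le_bmoNorm {Ω : Type*} {m0 : MeasurableSpace Ω} {μ : Measure Ω}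
    {ℱ : Filtration ℕ m0} {α : ℝ} {f f' : ℕ → Ω → ℝ} {g g' : Ω → ℝ}
    (h : ∀ n A, MeasurableSet[ℱ n] A →
      ∫⁻ ω in A, ‖g' ω - predVal f' n ω‖ₑ ^ 2 ∂μ ≤ ∫⁻ ω in A, ‖g ω - predVal f n ω‖ₑ ^ 2 ∂μ) :
    bmoNorm μ ℱ α f' g' ≤ bmoNorm μ ℱ α f g :=
  iSup₂_mono fun n A => iSup_mono fun hA =>
    ENNReal.div_le_div_right (ENNReal.rpow_le_rpow (h n A hA) (by norm_num)) _

/-- the square function is bounded on `BMO^α`: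
`‖S(f)‖_{BMO^α} ≤ C ‖f‖_{BMO^α}`, where the `BMO^α` norm of the adapted process
`S(f)` uses `S_{n-1}(f)` as the `(n-1)`-th term. -/
theorem stmt8 :
    ∃ C : ℝ≥0∞, 0 < C ∧ C < ⊤ ∧
      ∀ {Ω : Type} {m0 : MeasurableSpace Ω} (μ : Measure Ω)
        [IsProbabilityMeasure μ] (ℱ : Filtration ℕ m0)
        (α : ℝ), 0 ≤ α → α ≤ 1 →
        ∀ (f : ℕ → Ω → ℝ) (g : Ω → ℝ), Martingale f ℱ μ → MemLp g 2 μ →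
          (∀ n, f n =ᵐ[μ] μ[g | ℱ n]) →
          bmoNorm μ ℱ α f g < ⊤ →
          bmoNorm μ ℱ α (sqFnN f) (sqFn f) ≤ C * bmoNorm μ ℱ α f g := by
  refine ⟨1, one_pos, one_lt_top, ?_⟩
  intro Ω m0 μ _ ℱ α _ _ f g hf hg hfg _
  rw [one_mul]
  exact bmoNorm_le_bmoNorm fun n A hA =>
    setLIntegral_enorm_sqFn_sub_le hf.stronglyAdapted hg hfg hA
end
end

section
/- Let (Ω,F,P) be a probability space where each F_n is atomic with atoms I^{(n)}, and set ω_n = Σ |I^{(n)}| 1_{I^{(n)}}. Then for an L²-martingale f, sup_n ‖ω_n^{-α} E(|f - f_{n-1}|² | F_n)^{1/2}‖_∞ < ∞ if and only if sup_n sup_{A∈F_n} P(A)^{-1/2-α} (∫_A |f-f_{n-1}|² dP)^{1/2} < ∞, and the two quantities are equivalent norms. -/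
/-!
Every `F_n`-measurable set `A` is a disjoint union of atoms `I_j`, and a bound
`∫_B |g - f_{n-1}|² ≤ S² μ(B)^{1+2α}` passes from the atoms to `A` because the exponent is at
least `1`: `∑ μ(I_j)^{1+2α} ≤ μ(A)^{2α} ∑ μ(I_j) = μ(A)^{1+2α}`. So the supremum over atoms
and the supremum over all `F_n`-measurable sets coincide, and the norms are equivalent with
constant `1`.
-/

open MeasureTheory ENNReal Set
open scoped Classical NNReal

noncomputable section

namespace ENNReal

lemma div_rpow_div_rpow_eq {x b : ℝ≥0∞} {p α : ℝ} (hp : 0 ≤ p) (hα : 0 ≤ α) (hb : b ≠ ∞) :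
    (x / b) ^ p / b ^ α = x ^ p / b ^ (p + α) := by
  rw [div_rpow_of_nonneg _ _ hp, rpow_add_of_nonneg p α hp hα, div_eq_mul_inv, div_eq_mul_inv,
    div_eq_mul_inv, mul_assoc, ENNReal.mul_inv (.inr (rpow_ne_top_of_nonneg hα hb))
      (.inl (rpow_ne_top_of_nonneg hp hb))]

lemma rpow_half_div_rpow_le_iff_s13 {x b S : ℝ≥0∞} {γ : ℝ} (hb₀ : b ≠ 0) (hb : b ≠ ∞) :
    x ^ (1 / 2 : ℝ) / b ^ γ ≤ S ↔ x ≤ S ^ 2 * b ^ (2 * γ) := by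
  rw [ENNReal.div_le_iff (rpow_pos (pos_iff_ne_zero.2 hb₀) hb).ne' (rpow_ne_top_of_ne_zero hb₀ hb),
    one_div, rpow_inv_le_iff two_pos, mul_rpow_of_nonneg _ _ zero_le_two, mul_comm 2 γ, rpow_mul,
    rpow_two]

lemma rpow_half_div_rpow_le_of_le {x b S : ℝ≥0∞} {γ : ℝ} (h : x ≤ S ^ 2 * b ^ (2 * γ)) :
    x ^ (1 / 2 : ℝ) / b ^ γ ≤ S := by
  refine div_le_of_le_mul ?_
  rw [one_div, rpow_inv_le_iff two_pos, mul_rpow_of_nonneg _ _ zero_le_two, rpow_two, rpow_two]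
  rwa [mul_comm 2 γ, rpow_mul, rpow_two] at h

end ENNReal

namespace MeasureTheory

variable {Ω : Type*} {m0 : MeasurableSpace Ω} {μ : Measure Ω}

lemma setLIntegral_le_sq_mul_rpow_of_rpow_half_div_le [IsFiniteMeasure μ] {F : Ω → ℝ≥0∞}
    {B : Set Ω} {S : ℝ≥0∞} {γ : ℝ}
    (h : (∫⁻ ω in B, F ω ∂μ) ^ (1 / 2 : ℝ) / μ B ^ γ ≤ S) :
    ∫⁻ ω in B, F ω ∂μ ≤ S ^ 2 * μ B ^ (2 * γ) := by
  rcases eq_or_ne (μ B) 0 with hB | hB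
  · simp [setLIntegral_measure_zero B F hB]
  · exact (rpow_half_div_rpow_le_iff_s13 hB (measure_ne_top μ B)).1 h

lemma setLIntegral_iUnion_le_mul_rpow {ι : Type*} [Countable ι] {I : ι → Set Ω}
    (hI : ∀ j, MeasurableSet (I j)) (hd : Pairwise (Function.onFun Disjoint I))
    {F : Ω → ℝ≥0∞} {c : ℝ≥0∞} {β : ℝ} (hβ : 1 ≤ β)
    (h : ∀ j, ∫⁻ ω in I j, F ω ∂μ ≤ c * μ (I j) ^ β) :
    ∫⁻ ω in ⋃ j, I j, F ω ∂μ ≤ c * μ (⋃ j, I j) ^ β := by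
  have hsplit : ∀ B : Set Ω, μ B ^ β = μ B ^ (β - 1) * μ B := fun B => by
    simpa using rpow_add_of_nonneg (x := μ B) (β - 1) 1 (sub_nonneg.2 hβ) zero_le_one
  calc ∫⁻ ω in ⋃ j, I j, F ω ∂μ = ∑' j, ∫⁻ ω in I j, F ω ∂μ := lintegral_iUnion hI hd F
    _ ≤ ∑' j, c * (μ (⋃ j, I j) ^ (β - 1) * μ (I j)) := by
      refine ENNReal.tsum_le_tsum fun j => (h j).trans ?_
      rw [hsplit]
      gcongr
      exact subset_iUnion I j
    _ = c * μ (⋃ j, I j) ^ β := by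
      rw [ENNReal.tsum_mul_left, ENNReal.tsum_mul_left, ← measure_iUnion hd hI, ← hsplit]

theorem iSup_atom_eq_iSup_measurableSet [IsFiniteMeasure μ] {m : MeasurableSpace Ω} (hm : m ≤ m0)
    {ι : Type*} [Countable ι] {I : ι → Set Ω} (hI : ∀ j, MeasurableSet[m] (I j))
    (hd : Pairwise (Function.onFun Disjoint I))
    (hatomic : ∀ A, MeasurableSet[m] A → ∃ s : Set ι, A = ⋃ j ∈ s, I j)
    (F : Ω → ℝ≥0∞) {α : ℝ} (hα : 0 ≤ α) :
    (⨆ j, ((∫⁻ ω in I j, F ω ∂μ) / μ (I j)) ^ (1 / 2 : ℝ) / μ (I j) ^ α) =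
      ⨆ (A : Set Ω) (_ : MeasurableSet[m] A),
        (∫⁻ ω in A, F ω ∂μ) ^ (1 / 2 : ℝ) / μ A ^ (1 / 2 + α : ℝ) := by
  simp_rw [div_rpow_div_rpow_eq one_half_pos.le hα (measure_ne_top μ _)]
  refine le_antisymm (iSup_le fun j => le_iSup₂_of_le (I j) (hI j) le_rfl) (iSup₂_le fun A hA => ?_)
  obtain ⟨s, rfl⟩ := hatomic A hA
  rw [biUnion_eq_iUnion]
  have hatom : ∀ j : s, ∫⁻ ω in I j, F ω ∂μ ≤
      (⨆ j, (∫⁻ ω in I j, F ω ∂μ) ^ (1 / 2 : ℝ) / μ (I j) ^ (1 / 2 + α)) ^ 2 *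
        μ (I j) ^ (2 * (1 / 2 + α)) := fun j =>
    setLIntegral_le_sq_mul_rpow_of_rpow_half_div_le
      (le_iSup (fun j => (∫⁻ ω in I j, F ω ∂μ) ^ (1 / 2 : ℝ) / μ (I j) ^ (1 / 2 + α)) (j : ι))
  exact rpow_half_div_rpow_le_of_le <| setLIntegral_iUnion_le_mul_rpow (fun j : s => hm _ (hI j))
    (fun i j hij => hd (Subtype.coe_ne_coe.2 hij)) (by linarith) hatom

end MeasureTheory

/-- On the atom `I n j`, `ω_n^{-α} E(|g - f_{n-1}|² | F_n)^{1/2}` is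
`μ(I n j)^{-α} (μ(I n j)⁻¹ ∫_{I n j} |g - f_{n-1}|²)^{1/2}`, so the left-hand supremum is
`sup_n ‖ω_n^{-α} E(|g - f_{n-1}|² | F_n)^{1/2}‖_∞`. -/
theorem stmt13_general {Ω : Type*} {m0 : MeasurableSpace Ω} (μ : Measure Ω)
    [IsProbabilityMeasure μ] (ℱ : Filtration ℕ m0)
    (α : ℝ) (hα0 : 0 ≤ α)
    (I : ℕ → ℕ → Set Ω)
    (hmeas : ∀ n j, MeasurableSet[ℱ n] (I n j))
    (hdisj : ∀ n, Pairwise (Function.onFun Disjoint (I n)))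
    (hatomic : ∀ n (A : Set Ω), MeasurableSet[ℱ n] A → ∃ s : Set ℕ, A = ⋃ j ∈ s, I n j)
    (f : ℕ → Ω → ℝ) (g : Ω → ℝ) :
    ((⨆ (n : ℕ) (j : ℕ),
        ((∫⁻ ω in I n j, (‖g ω - predVal f n ω‖₊ : ℝ≥0∞) ^ 2 ∂μ) / μ (I n j)) ^ (1/2 : ℝ)
          / μ (I n j) ^ α) < ⊤ ↔ bmoNorm μ ℱ α f g < ⊤) ∧
      ∃ C : ℝ≥0∞, 0 < C ∧ C < ⊤ ∧
        C⁻¹ * bmoNorm μ ℱ α f g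
            ≤ (⨆ (n : ℕ) (j : ℕ),
                ((∫⁻ ω in I n j, (‖g ω - predVal f n ω‖₊ : ℝ≥0∞) ^ 2 ∂μ) / μ (I n j)) ^ (1/2 : ℝ)
                  / μ (I n j) ^ α) ∧
          (⨆ (n : ℕ) (j : ℕ),
              ((∫⁻ ω in I n j, (‖g ω - predVal f n ω‖₊ : ℝ≥0∞) ^ 2 ∂μ) / μ (I n j)) ^ (1/2 : ℝ)
                / μ (I n j) ^ α)
            ≤ C * bmoNorm μ ℱ α f g := by
  have hS : (⨆ (n : ℕ) (j : ℕ),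
      ((∫⁻ ω in I n j, (‖g ω - predVal f n ω‖₊ : ℝ≥0∞) ^ 2 ∂μ) / μ (I n j)) ^ (1/2 : ℝ)
        / μ (I n j) ^ α) = bmoNorm μ ℱ α f g :=
    iSup_congr fun n =>
      iSup_atom_eq_iSup_measurableSet (ℱ.le n) (hmeas n) (hdisj n) (hatomic n) _ hα0
  rw [hS]
  exact ⟨Iff.rfl, 1, one_pos, one_lt_top, by rw [inv_one, one_mul], by rw [one_mul]⟩

/-- in the atomic setting (each `F_n` generated by countably many atoms
`I n j`), the atomic-weight formulation
`sup_n ‖ω_n^{-α} E(|f - f_{n-1}|²|F_n)^{1/2}‖_∞` — which on the atom `I n j` equals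
`P(I n j)^{-α} ((1/P(I n j)) ∫_{I n j} |f - f_{n-1}|² dP)^{1/2}` — is finite iff the
`BMO^α` norm is finite, and the two quantities are equivalent. -/
theorem stmt13 {Ω : Type*} {m0 : MeasurableSpace Ω} (μ : Measure Ω)
    [IsProbabilityMeasure μ] (ℱ : Filtration ℕ m0)
    (α : ℝ) (hα0 : 0 ≤ α) (hα1 : α ≤ 1)
    (I : ℕ → ℕ → Set Ω)
    (hmeas : ∀ n j, MeasurableSet[ℱ n] (I n j))
    (hdisj : ∀ n, Pairwise (Function.onFun Disjoint (I n)))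
    (hcover : ∀ n, (⋃ j, I n j) = Set.univ)
    (hatomic : ∀ n (A : Set Ω), MeasurableSet[ℱ n] A → ∃ s : Set ℕ, A = ⋃ j ∈ s, I n j)
    (f : ℕ → Ω → ℝ) (g : Ω → ℝ) (hf : Martingale f ℱ μ) (hg : MemLp g 2 μ)
    (hfg : ∀ n, f n =ᵐ[μ] μ[g | ℱ n]) :
    ((⨆ (n : ℕ) (j : ℕ),
        ((∫⁻ ω in I n j, (‖g ω - predVal f n ω‖₊ : ℝ≥0∞) ^ 2 ∂μ) / μ (I n j)) ^ (1/2 : ℝ)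
          / μ (I n j) ^ α) < ⊤ ↔ bmoNorm μ ℱ α f g < ⊤) ∧
      ∃ C : ℝ≥0∞, 0 < C ∧ C < ⊤ ∧
        C⁻¹ * bmoNorm μ ℱ α f g
            ≤ (⨆ (n : ℕ) (j : ℕ),
                ((∫⁻ ω in I n j, (‖g ω - predVal f n ω‖₊ : ℝ≥0∞) ^ 2 ∂μ) / μ (I n j)) ^ (1/2 : ℝ)
                  / μ (I n j) ^ α) ∧
          (⨆ (n : ℕ) (j : ℕ),
              ((∫⁻ ω in I n j, (‖g ω - predVal f n ω‖₊ : ℝ≥0∞) ^ 2 ∂μ) / μ (I n j)) ^ (1/2 : ℝ)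
                / μ (I n j) ^ α)
            ≤ C * bmoNorm μ ℱ α f g :=
  stmt13_general μ ℱ α hα0 I hmeas hdisj hatomic f g
end
end
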